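/- Let C ⊂ H^d be a complete body of diameter δ, let a, b ∈ C, and let c ∈ H^d satisfy d(a,c) = d(b,c) = δ. Then the circular arc P_c(a,b) is contained in C. -/

import Mathlib

/- We formalize hyperbolic space `H^d` via the Beltrami–Klein model: the open
unit ball of `ℝ^d`, where hyperbolic geodesic segments are exactly Euclidean
segments (so hyperbolic convexity = Euclidean convexity), hyperplanes are
chords of affine hyperplanes, and the hyperbolic distance is given by the
Cayley–Klein formula `cosh d(x,y) = (1 - ⟪x,y⟫)/√((1-‖x‖²)(1-‖y‖²))`. -/

noncomputable section
open Metric Set RealInnerProductSpace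

namespace Hyp

abbrev E (d : ℕ) := EuclideanSpace ℝ (Fin d)

/-- The Klein model of `H^d`: the open unit ball. -/
def ball01 (d : ℕ) : Set (E d) := Metric.ball 0 1

/-- Inverse hyperbolic cosine. -/
def acosh (z : ℝ) : ℝ := Real.log (z + Real.sqrt (z ^ 2 - 1))

/-- Hyperbolic distance in the Beltrami–Klein model. -/
def hDist {d : ℕ} (x y : E d) : ℝ :=
  acosh ((1 - (inner ℝ x y : ℝ)) / (Real.sqrt (1 - ‖x‖ ^ 2) * Real.sqrt (1 - ‖y‖ ^ 2)))

/-- Hyperbolic diameter of a set. -/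
def hDiam {d : ℕ} (C : Set (E d)) : ℝ :=
  sSup {r | ∃ a ∈ C, ∃ b ∈ C, hDist a b = r}

/-- Hyperbolic (infimal) distance between two sets. -/
def hSetDist {d : ℕ} (A B : Set (E d)) : ℝ :=
  sInf {r | ∃ a ∈ A, ∃ b ∈ B, hDist a b = r}

/-- Hyperbolic distance from a point to a set. -/
def hPointDist {d : ℕ} (x : E d) (A : Set (E d)) : ℝ :=
  sInf {r | ∃ a ∈ A, hDist x a = r}

/-- Closed hyperbolic ball of radius `r` about `x`. -/
def hBall {d : ℕ} (x : E d) (r : ℝ) : Set (E d) :=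
  {y ∈ ball01 d | hDist x y ≤ r}

/-- A convex body in `H^d`: compact, convex (hyperbolically, i.e. in the Klein
model also Euclidean-convex), with nonempty interior, inside the model. -/
def IsBody {d : ℕ} (C : Set (E d)) : Prop :=
  IsCompact C ∧ Convex ℝ C ∧ (interior C).Nonempty ∧ C ⊆ ball01 d

/-- A hyperplane of `H^d` in the Klein model: a chord `{x ∈ B | ⟪u,x⟫ = c}` of
the unit ball, with `‖u‖ = 1` and `|c| < 1` (so the chord is nonempty). -/
structure HPlane (d : ℕ) where
  u : E d
  c : ℝ
  norm_u : ‖u‖ = 1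
  abs_c : |c| < 1

/-- The underlying set of points of a hyperplane. -/
def HPlane.carrier {d : ℕ} (H : HPlane d) : Set (E d) :=
  {x ∈ ball01 d | (inner ℝ H.u x : ℝ) = H.c}

/-- `H` supports `C`: they meet and `C` lies in the closed half-space
`⟪u,·⟫ ≤ c` (an orientation of the normal is chosen accordingly). -/
def Supports {d : ℕ} (H : HPlane d) (C : Set (E d)) : Prop :=
  (H.carrier ∩ C).Nonempty ∧ ∀ x ∈ C, (inner ℝ H.u x : ℝ) ≤ H.c

/-- Two hyperplanes are ultraparallel iff their closures (in `ℝ^d`, hence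
including ideal boundary points) are disjoint. -/
def Ultraparallel {d : ℕ} (H K : HPlane d) : Prop :=
  closure H.carrier ∩ closure K.carrier = ∅

/-- The width of `C` determined by a supporting hyperplane `H`: the distance
from `H` to a farthest ultraparallel supporting hyperplane of `C`. -/
def hwidth {d : ℕ} (C : Set (E d)) (H : HPlane d) : ℝ :=
  sSup {r | ∃ K : HPlane d, Ultraparallel H K ∧ Supports K C ∧
    r = hSetDist H.carrier K.carrier}

/-- Thickness: the minimum width over all supporting hyperplanes. -/
def thickness {d : ℕ} (C : Set (E d)) : ℝ :=
  sInf {r | ∃ H : HPlane d, Supports H C ∧ r = hwidth C H}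

/-- A reduced body. -/
def IsReduced {d : ℕ} (R : Set (E d)) : Prop :=
  IsBody R ∧ ∀ Z : Set (E d), IsBody Z → Z ⊆ R → Z ≠ R → thickness Z < thickness R

/-- The equidistant hypersurface to `H` at distance `t`, on the side
`⟪u,·⟫ < c` (the side on which supported bodies lie). -/
def equiSurf {d : ℕ} (H : HPlane d) (t : ℝ) : Set (E d) :=
  {x ∈ ball01 d | (inner ℝ H.u x : ℝ) < H.c ∧ hPointDist x H.carrier = t}

/-- The distance from `H` to the nearest equidistant hypersurface `E` to `H`
with `C ⊆ conv(H ∪ E)` (the thickness of the equidistant strip `conv(H ∪ E)`). -/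
def equiLevel {d : ℕ} (C : Set (E d)) (H : HPlane d) : ℝ :=
  sInf {t | 0 < t ∧ C ⊆ convexHull ℝ (H.carrier ∪ equiSurf H t)}

/-- `E_H(C)`: the nearest equidistant hypersurface to `H` such that `C` is
contained in the equidistant strip `conv(H ∪ E_H(C))`. -/
def EH {d : ℕ} (C : Set (E d)) (H : HPlane d) : Set (E d) :=
  equiSurf H (equiLevel C H)

/-- A body of constant width `δ`. -/
def ConstWidth {d : ℕ} (C : Set (E d)) (δ : ℝ) : Prop :=
  ∀ H : HPlane d, Supports H C → hwidth C H = δ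

/-- A complete set of diameter `δ`: adding any point of `H^d` outside `C`
strictly increases the diameter. -/
def IsComplete {d : ℕ} (C : Set (E d)) (δ : ℝ) : Prop :=
  hDiam C = δ ∧ ∀ x ∈ ball01 d, x ∉ C → hDiam (insert x C) > δ

/-- The circular arc `P_c(a,b)`: points `g` at hyperbolic distance `δ` from `c`
whose (hyperbolic = Euclidean, in the Klein model) segment to `c` meets the
segment `ab`. -/
def arcP {d : ℕ} (c a b : E d) (δ : ℝ) : Set (E d) :=
  {g ∈ ball01 d | hDist c g = δ ∧ (segment ℝ c g ∩ segment ℝ a b).Nonempty}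

/-! Suppose `g ∈ P_c(a,b)` lies outside `C`. By completeness some `x ∈ C` is farther than `δ`
from `g`, while `d(x,a), d(x,b) ≤ δ = d(c,a) = d(c,b)`. In the Klein model the perpendicular
bisector of `x` and `c` is a Euclidean hyperplane, so the points at least as close to `x` as to
`c` form a convex set containing the segment `ab`, and the points strictly closer to `c` form a
convex set containing `c` and `g`, hence the segment `cg`. These segments cannot meet. -/

section KleinDistance

variable {d : ℕ} {x y : E d}

def coshDist (x y : E d) : ℝ :=
  (1 - ⟪x, y⟫) / (√(1 - ‖x‖ ^ 2) * √(1 - ‖y‖ ^ 2))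

lemma hDist_eq_arcosh_coshDist (x y : E d) : hDist x y = Real.arcosh (coshDist x y) := rfl

lemma norm_lt_one_of_mem_ball01 (hx : x ∈ ball01 d) : ‖x‖ < 1 := by
  simpa [ball01] using hx

lemma one_sub_norm_sq_pos (hx : x ∈ ball01 d) : 0 < 1 - ‖x‖ ^ 2 := by
  nlinarith [norm_nonneg x, norm_lt_one_of_mem_ball01 hx]

lemma sqrt_one_sub_norm_sq_pos (hx : x ∈ ball01 d) : 0 < √(1 - ‖x‖ ^ 2) :=
  Real.sqrt_pos.2 (one_sub_norm_sq_pos hx)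

lemma inner_lt_one (hx : x ∈ ball01 d) (hy : y ∈ ball01 d) : ⟪x, y⟫ < 1 := by
  nlinarith [real_inner_le_norm x y, norm_nonneg x, norm_nonneg y,
    norm_lt_one_of_mem_ball01 hx, norm_lt_one_of_mem_ball01 hy]

lemma coshDist_comm (x y : E d) : coshDist x y = coshDist y x := by
  rw [coshDist, coshDist, real_inner_comm, mul_comm]

/- Writing `⟪x, y⟫ = (‖x‖² + ‖y‖² - ‖x - y‖²) / 2`, the difference of the two sides is at least
`(1 - (‖x‖² + ‖y‖²) / 2) ‖x - y‖²`. -/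
lemma one_sub_norm_sq_mul_le (hx : x ∈ ball01 d) (hy : y ∈ ball01 d) :
    (1 - ‖x‖ ^ 2) * (1 - ‖y‖ ^ 2) ≤ (1 - ⟪x, y⟫) ^ 2 := by
  nlinarith [norm_sub_sq_real x y, sq_nonneg (‖x‖ ^ 2 - ‖y‖ ^ 2), sq_nonneg ‖x - y‖,
    mul_nonneg (add_pos (one_sub_norm_sq_pos hx) (one_sub_norm_sq_pos hy)).le
      (sq_nonneg ‖x - y‖)]

lemma one_sub_norm_sq_mul_lt (hx : x ∈ ball01 d) (hy : y ∈ ball01 d) (hxy : x ≠ y) :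
    (1 - ‖x‖ ^ 2) * (1 - ‖y‖ ^ 2) < (1 - ⟪x, y⟫) ^ 2 := by
  have hD : 0 < ‖x - y‖ ^ 2 := pow_pos (norm_pos_iff.2 (sub_ne_zero.2 hxy)) 2
  nlinarith [norm_sub_sq_real x y, sq_nonneg (‖x‖ ^ 2 - ‖y‖ ^ 2), sq_nonneg ‖x - y‖,
    mul_pos (add_pos (one_sub_norm_sq_pos hx) (one_sub_norm_sq_pos hy)) hD]

lemma one_le_coshDist (hx : x ∈ ball01 d) (hy : y ∈ ball01 d) : 1 ≤ coshDist x y := by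
  rw [coshDist, one_le_div (mul_pos (sqrt_one_sub_norm_sq_pos hx) (sqrt_one_sub_norm_sq_pos hy)),
    ← Real.sqrt_mul (one_sub_norm_sq_pos hx).le,
    Real.sqrt_le_left (sub_pos.2 (inner_lt_one hx hy)).le]
  exact one_sub_norm_sq_mul_le hx hy

lemma one_lt_coshDist (hx : x ∈ ball01 d) (hy : y ∈ ball01 d) (hxy : x ≠ y) :
    1 < coshDist x y := by
  rw [coshDist, one_lt_div (mul_pos (sqrt_one_sub_norm_sq_pos hx) (sqrt_one_sub_norm_sq_pos hy)),
    ← Real.sqrt_mul (one_sub_norm_sq_pos hx).le, Real.sqrt_lt' (sub_pos.2 (inner_lt_one hx hy))]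
  exact one_sub_norm_sq_mul_lt hx hy hxy

lemma coshDist_self (hx : x ∈ ball01 d) : coshDist x x = 1 := by
  rw [coshDist, real_inner_self_eq_norm_sq, Real.mul_self_sqrt (one_sub_norm_sq_pos hx).le,
    div_self (one_sub_norm_sq_pos hx).ne']

lemma hDist_comm (x y : E d) : hDist x y = hDist y x := by
  rw [hDist_eq_arcosh_coshDist, coshDist_comm, ← hDist_eq_arcosh_coshDist]

lemma hDist_self (hx : x ∈ ball01 d) : hDist x x = 0 := by
  rw [hDist_eq_arcosh_coshDist, coshDist_self hx, Real.arcosh_zero]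

lemma hDist_nonneg (hx : x ∈ ball01 d) (hy : y ∈ ball01 d) : 0 ≤ hDist x y :=
  Real.arcosh_nonneg (one_le_coshDist hx hy)

lemma hDist_pos (hx : x ∈ ball01 d) (hy : y ∈ ball01 d) (hxy : x ≠ y) : 0 < hDist x y :=
  Real.arcosh_pos (one_lt_coshDist hx hy hxy)

lemma continuousOn_hDist :
    ContinuousOn (fun q : E d × E d ↦ hDist q.1 q.2) (ball01 d ×ˢ ball01 d) := by
  refine Real.continuousOn_arcosh.comp (t := Ici 1) ?_ fun q hq ↦ one_le_coshDist hq.1 hq.2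
  refine ContinuousOn.div (by fun_prop) (by fun_prop) fun q hq ↦ ?_
  exact (mul_pos (sqrt_one_sub_norm_sq_pos hq.1) (sqrt_one_sub_norm_sq_pos hq.2)).ne'

end KleinDistance

section Bisector

variable {d : ℕ} {x y c : E d}

/-- `(lorentzFactor x, lorentzFactor x • x)` is the lift of `x` to the hyperboloid model. -/
def lorentzFactor (x : E d) : ℝ := (√(1 - ‖x‖ ^ 2))⁻¹

lemma coshDist_mul_sqrt (hy : y ∈ ball01 d) (x : E d) :
    coshDist x y * √(1 - ‖y‖ ^ 2) = lorentzFactor x - ⟪lorentzFactor x • x, y⟫ := by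
  rw [coshDist, lorentzFactor, real_inner_smul_left, div_mul_eq_div_div,
    div_mul_cancel₀ _ (sqrt_one_sub_norm_sq_pos hy).ne']
  ring

lemma hDist_le_hDist_iff (hx : x ∈ ball01 d) (hc : c ∈ ball01 d) (hy : y ∈ ball01 d) :
    hDist x y ≤ hDist c y ↔
      ⟪lorentzFactor c • c - lorentzFactor x • x, y⟫ ≤ lorentzFactor c - lorentzFactor x := by
  rw [hDist_eq_arcosh_coshDist, hDist_eq_arcosh_coshDist,
    Real.arcosh_le_arcosh (one_pos.trans_le (one_le_coshDist hx hy))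
      (one_pos.trans_le (one_le_coshDist hc hy)),
    ← mul_le_mul_iff_of_pos_right (sqrt_one_sub_norm_sq_pos hy), coshDist_mul_sqrt hy,
    coshDist_mul_sqrt hy, inner_sub_left]
  constructor <;> intro h <;> linarith

lemma hDist_lt_hDist_iff (hx : x ∈ ball01 d) (hc : c ∈ ball01 d) (hy : y ∈ ball01 d) :
    hDist x y < hDist c y ↔
      ⟪lorentzFactor c • c - lorentzFactor x • x, y⟫ < lorentzFactor c - lorentzFactor x := by
  rw [hDist_eq_arcosh_coshDist, hDist_eq_arcosh_coshDist,
    Real.arcosh_lt_arcosh (one_pos.trans_le (one_le_coshDist hx hy))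
      (one_pos.trans_le (one_le_coshDist hc hy)),
    ← mul_lt_mul_iff_of_pos_right (sqrt_one_sub_norm_sq_pos hy), coshDist_mul_sqrt hy,
    coshDist_mul_sqrt hy, inner_sub_left]
  constructor <;> intro h <;> linarith

lemma convex_setOf_hDist_le_hDist (hx : x ∈ ball01 d) (hc : c ∈ ball01 d) :
    Convex ℝ {y ∈ ball01 d | hDist x y ≤ hDist c y} := by
  have : {y ∈ ball01 d | hDist x y ≤ hDist c y} = ball01 d ∩
      {y | ⟪lorentzFactor c • c - lorentzFactor x • x, y⟫ ≤ lorentzFactor c - lorentzFactor x} :=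
    Set.ext fun y ↦ and_congr_right (hDist_le_hDist_iff hx hc)
  rw [this]
  exact (convex_ball 0 1).inter (convex_halfSpace_le (innerₛₗ ℝ _).isLinear _)

lemma convex_setOf_hDist_lt_hDist (hx : x ∈ ball01 d) (hc : c ∈ ball01 d) :
    Convex ℝ {y ∈ ball01 d | hDist x y < hDist c y} := by
  have : {y ∈ ball01 d | hDist x y < hDist c y} = ball01 d ∩
      {y | ⟪lorentzFactor c • c - lorentzFactor x • x, y⟫ < lorentzFactor c - lorentzFactor x} :=
    Set.ext fun y ↦ and_congr_right (hDist_lt_hDist_iff hx hc)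
  rw [this]
  exact (convex_ball 0 1).inter (convex_halfSpace_lt (innerₛₗ ℝ _).isLinear _)

end Bisector

section Diameter

variable {d : ℕ} {C : Set (E d)} {x y g : E d} {δ : ℝ}

lemma hDist_le_hDiam (hcpt : IsCompact C) (hsub : C ⊆ ball01 d) (hx : x ∈ C) (hy : y ∈ C) :
    hDist x y ≤ hDiam C := by
  have hdists : {r | ∃ a ∈ C, ∃ b ∈ C, hDist a b = r} =
      (fun q : E d × E d ↦ hDist q.1 q.2) '' (C ×ˢ C) := by
    ext r
    simp
  have hbdd : BddAbove {r | ∃ a ∈ C, ∃ b ∈ C, hDist a b = r} := hdists ▸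
    (hcpt.prod hcpt).bddAbove_image (continuousOn_hDist.mono (prod_mono hsub hsub))
  exact le_csSup hbdd ⟨x, hx, y, hy, rfl⟩

lemma hDiam_nonneg (hsub : C ⊆ ball01 d) : 0 ≤ hDiam C :=
  Real.sSup_nonneg <| by
    rintro _ ⟨x, hx, y, hy, rfl⟩
    exact hDist_nonneg (hsub hx) (hsub hy)

lemma hDiam_insert_le (hg : g ∈ ball01 d) (hδ : 0 ≤ δ)
    (hC : ∀ x ∈ C, ∀ y ∈ C, hDist x y ≤ δ) (hgC : ∀ x ∈ C, hDist x g ≤ δ) :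
    hDiam (insert g C) ≤ δ := by
  refine Real.sSup_le ?_ hδ
  rintro _ ⟨x, hx, y, hy, rfl⟩
  rcases hx with rfl | hx <;> rcases hy with rfl | hy
  · exact (hDist_self hg).trans_le hδ
  · exact hDist_comm x y ▸ hgC y hy
  · exact hgC x hx
  · exact hC x hx y hy

lemma IsComplete.exists_lt_hDist (hcomp : IsComplete C δ) (hcpt : IsCompact C)
    (hsub : C ⊆ ball01 d) (hg : g ∈ ball01 d) (hgC : g ∉ C) : ∃ x ∈ C, δ < hDist x g := by
  by_contra! hfar
  refine (hcomp.2 g hg hgC).not_ge (hDiam_insert_le hg ?_ (fun x hx y hy ↦ ?_) hfar)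
  · exact hcomp.1 ▸ hDiam_nonneg hsub
  · exact hcomp.1 ▸ hDist_le_hDiam hcpt hsub hx hy

end Diameter

/-- If `a, b` belong to a complete body `C` of diameter `δ` and `c` is at
distance `δ` from both, then the arc `P_c(a,b)` is contained in `C`. -/
theorem arcP_subset_complete {d : ℕ} (C : Set (E d)) (hC : IsBody C)
    (δ : ℝ) (hcomp : IsComplete C δ) (a b : E d) (ha : a ∈ C) (hb : b ∈ C)
    (c : E d) (hc : c ∈ ball01 d) (hac : hDist a c = δ) (hbc : hDist b c = δ) :
    arcP c a b δ ⊆ C := by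
  obtain ⟨hcpt, -, -, hsub⟩ := hC
  rintro g ⟨hg, hcg, p, hpcg, hpab⟩
  by_contra hgC
  obtain ⟨x, hxC, hxg⟩ := hcomp.exists_lt_hDist hcpt hsub hg hgC
  have hx := hsub hxC
  have hxc : x ≠ c := by
    rintro rfl
    exact hxg.ne' hcg
  have hp_near : hDist x p ≤ hDist c p := by
    refine ((convex_setOf_hDist_le_hDist hx hc).segment_subset ⟨hsub ha, ?_⟩ ⟨hsub hb, ?_⟩
      hpab).2
    · rw [hDist_comm c a, hac]
      exact hcomp.1 ▸ hDist_le_hDiam hcpt hsub hxC ha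
    · rw [hDist_comm c b, hbc]
      exact hcomp.1 ▸ hDist_le_hDiam hcpt hsub hxC hb
  have hp_far : hDist c p < hDist x p := by
    refine ((convex_setOf_hDist_lt_hDist hc hx).segment_subset ⟨hc, ?_⟩ ⟨hg, hcg.trans_lt hxg⟩
      hpcg).2
    rw [hDist_self hc]
    exact hDist_pos hx hc hxc
  exact hp_far.not_ge hp_near

end Hyp
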